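/- Let H be a real inner product space, let φ₁,…,φₙ ∈ H with ‖φᵢ‖ ≤ 1 and y₁,…,yₙ ∈ [−1,1], and let φ̃₁,…,φ̃ₙ, ỹ₁,…,ỹₙ be a second dataset with the same bounds that agrees with the first except at a single index k. Let 0 < λ ≤ 1, let F(w) = (λ/2)‖w‖² + (1/n) Σ_{i=1}^n (⟨w, φᵢ⟩ − yᵢ)² and F̃(w) = (λ/2)‖w‖² + (1/n) Σ_{i=1}^n (⟨w, φ̃ᵢ⟩ − ỹᵢ)², and let w* minimize F over H and w̃* minimize F̃ over H. Then for every vector φ ∈ H with ‖φ‖ ≤ 1, |⟨w*, φ⟩ − ⟨w̃*, φ⟩| ≤ 8/(n λ^{3/2}); in particular, the test residuals y′ − ⟨w*, φ(x′)⟩ and y′ − ⟨w̃*, φ(x′)⟩ at any bounded test point differ by at most 8/(n λ^{3/2}). -/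

import Mathlib

open Real

/-- The kernel ridge regression objective. -/
noncomputable def ridgeObjective {H : Type*} [NormedAddCommGroup H] [InnerProductSpace ℝ H]
    {n : ℕ} (lam : ℝ) (φ : Fin n → H) (y : Fin n → ℝ) (w : H) : ℝ :=
  lam / 2 * ‖w‖ ^ 2 + (1 / (n : ℝ)) * ∑ i, (inner ℝ w (φ i) - y i : ℝ) ^ 2

lemma ridge_grad_zero {H : Type*} [NormedAddCommGroup H] [InnerProductSpace ℝ H]
    {n : ℕ} (lam : ℝ) (hlam0 : 0 < lam) (φ : Fin n → H) (y : Fin n → ℝ) (w : H)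
    (hw : ∀ v : H, ridgeObjective lam φ y w ≤ ridgeObjective lam φ y v) (v : H) :
    lam * (inner ℝ w v : ℝ)
      + (2 / (n : ℝ)) * ∑ i, ((inner ℝ w (φ i) : ℝ) - y i) * (inner ℝ v (φ i) : ℝ) = 0 := by
  set G : ℝ := lam * (inner ℝ w v : ℝ)
      + (2 / (n : ℝ)) * ∑ i, ((inner ℝ w (φ i) : ℝ) - y i) * (inner ℝ v (φ i) : ℝ) with hG
  set Q : ℝ := lam / 2 * ‖v‖ ^ 2 + (1 / (n : ℝ)) * ∑ i, (inner ℝ v (φ i) : ℝ) ^ 2 with hQdef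
  have hninv : (0:ℝ) ≤ 1 / (n : ℝ) := by positivity
  have hQ : 0 ≤ Q := by
    apply add_nonneg
    · positivity
    · exact mul_nonneg hninv (Finset.sum_nonneg fun i _ => sq_nonneg _)
  have key : ∀ t : ℝ, 0 ≤ t * G + t ^ 2 * Q := by
    intro t
    have h := hw (w + t • v)
    have hexp : ridgeObjective lam φ y (w + t • v)
        = ridgeObjective lam φ y w + (t * G + t ^ 2 * Q) := by
      unfold ridgeObjective
      have h1 : ‖w + t • v‖ ^ 2 = ‖w‖ ^ 2 + 2 * (t * (inner ℝ w v : ℝ)) + t ^ 2 * ‖v‖ ^ 2 := by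
        rw [norm_add_sq_real, real_inner_smul_right, norm_smul]
        rw [Real.norm_eq_abs, mul_pow, sq_abs]
      have h2 : ∀ i : Fin n, ((inner ℝ (w + t • v) (φ i) : ℝ) - y i) ^ 2
          = ((inner ℝ w (φ i) : ℝ) - y i) ^ 2
            + t * (((inner ℝ w (φ i) : ℝ) - y i) * (inner ℝ v (φ i) : ℝ) * 2)
            + t ^ 2 * (inner ℝ v (φ i) : ℝ) ^ 2 := by
        intro i
        rw [inner_add_left, real_inner_smul_left]
        ring
      rw [h1, Finset.sum_congr rfl fun i _ => h2 i]
      rw [Finset.sum_add_distrib, Finset.sum_add_distrib, ← Finset.mul_sum, ← Finset.mul_sum,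
        ← Finset.sum_mul]
      rw [hG, hQdef]
      ring
    rw [hexp] at h
    linarith
  have h2 := key (-G / (2 * (Q + 1)))
  have hc : (0:ℝ) < 2 * (Q + 1) := by linarith
  have hc' : (2 * (Q + 1)) ≠ 0 := ne_of_gt hc
  rw [div_mul_eq_mul_div, div_pow] at h2
  have h4 : 0 ≤ (-G * G / (2 * (Q + 1)) + (-G) ^ 2 / (2 * (Q + 1)) ^ 2 * Q) * (2 * (Q + 1)) ^ 2 :=
    mul_nonneg h2 (by positivity)
  have h5 : (-G * G / (2 * (Q + 1)) + (-G) ^ 2 / (2 * (Q + 1)) ^ 2 * Q) * (2 * (Q + 1)) ^ 2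
      = -(G ^ 2) * (Q + 2) := by
    field_simp
    ring
  rw [h5] at h4
  nlinarith [sq_nonneg G]

lemma ridge_norm_bound {H : Type*} [NormedAddCommGroup H] [InnerProductSpace ℝ H]
    {n : ℕ} (lam : ℝ) (hlam0 : 0 < lam) (hn : 0 < n) (φ : Fin n → H) (y : Fin n → ℝ) (w : H)
    (hy : ∀ i, y i ∈ Set.Icc (-1 : ℝ) 1)
    (hw : ∀ v : H, ridgeObjective lam φ y w ≤ ridgeObjective lam φ y v) :
    lam * ‖w‖ ^ 2 ≤ 1 / 2 := by
  have hg := ridge_grad_zero lam hlam0 φ y w hw w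
  rw [real_inner_self_eq_norm_sq] at hg
  have hN : (0:ℝ) < (n:ℝ) := Nat.cast_pos.2 hn
  have h1 : ∑ i : Fin n, (-(1/4) : ℝ)
      ≤ ∑ i, ((inner ℝ w (φ i) : ℝ) - y i) * (inner ℝ w (φ i) : ℝ) := by
    apply Finset.sum_le_sum
    intro i _
    have h := hy i
    nlinarith [sq_nonneg ((inner ℝ w (φ i) : ℝ) - y i / 2), h.1, h.2]
  have h2 : ∑ i : Fin n, (-(1/4) : ℝ) = -((n:ℝ)/4) := by
    simp
    ring
  rw [h2] at h1
  have h3 : 0 ≤ (2/(n:ℝ)) * ((∑ i, ((inner ℝ w (φ i) : ℝ) - y i) * (inner ℝ w (φ i) : ℝ)) + (n:ℝ)/4) :=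
    mul_nonneg (by positivity) (by linarith)
  have h4 : (2/(n:ℝ)) * ((∑ i, ((inner ℝ w (φ i) : ℝ) - y i) * (inner ℝ w (φ i) : ℝ)) + (n:ℝ)/4)
      = (2/(n:ℝ)) * (∑ i, ((inner ℝ w (φ i) : ℝ) - y i) * (inner ℝ w (φ i) : ℝ)) + 1/2 := by
    field_simp
    ring
  rw [h4] at h3
  linarith

set_option maxHeartbeats 1000000 in
/-- Changing a single training point changes the predictions of the kernel ridge regression
minimizer (hence the test residuals) at any bounded test point by at most `8 / (n λ^{3/2})`. -/
theorem ridge_prediction_stability {H : Type*} [NormedAddCommGroup H] [InnerProductSpace ℝ H]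
    {n : ℕ} (lam : ℝ) (hlam0 : 0 < lam) (hlam1 : lam ≤ 1) (k : Fin n)
    (φ tφ : Fin n → H) (y ty : Fin n → ℝ)
    (hφ : ∀ i, ‖φ i‖ ≤ 1) (htφ : ∀ i, ‖tφ i‖ ≤ 1)
    (hy : ∀ i, y i ∈ Set.Icc (-1 : ℝ) 1) (hty : ∀ i, ty i ∈ Set.Icc (-1 : ℝ) 1)
    (hφk : ∀ i, i ≠ k → φ i = tφ i) (hyk : ∀ i, i ≠ k → y i = ty i)
    (w tw : H)
    (hw : ∀ v : H, ridgeObjective lam φ y w ≤ ridgeObjective lam φ y v)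
    (htw : ∀ v : H, ridgeObjective lam tφ ty tw ≤ ridgeObjective lam tφ ty v) :
    ∀ φ₀ : H, ‖φ₀‖ ≤ 1 →
      |(inner ℝ w φ₀ : ℝ) - (inner ℝ tw φ₀ : ℝ)| ≤ 8 / ((n : ℝ) * lam ^ ((3 : ℝ) / 2)) := by
  intro φ₀ hφ₀
  have hn : 0 < n := k.pos
  have hN : (0:ℝ) < (n:ℝ) := Nat.cast_pos.2 hn
  set s : ℝ := Real.sqrt lam with hsdef
  have hs2 : s ^ 2 = lam := Real.sq_sqrt hlam0.le
  have hs0 : 0 < s := Real.sqrt_pos.2 hlam0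
  have hs1 : s ≤ 1 := by
    rw [hsdef, show (1:ℝ) = Real.sqrt 1 by simp]
    exact Real.sqrt_le_sqrt hlam1
  -- rpow rewrite
  have hrp : lam ^ ((3:ℝ)/2) = s ^ 3 := by
    have e1 : lam ^ ((3:ℝ)/2) = lam ^ (1:ℝ) * lam ^ ((1:ℝ)/2) := by
      rw [← Real.rpow_add hlam0]; norm_num
    have e2 : lam ^ ((1:ℝ)/2) = s := by rw [hsdef, Real.sqrt_eq_rpow]
    rw [e1, Real.rpow_one, e2, ← hs2]
    ring
  -- norm bounds
  have hb1 : lam * ‖w‖ ^ 2 ≤ 1/2 := ridge_norm_bound lam hlam0 hn φ y w hy hw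
  have hb2 : lam * ‖tw‖ ^ 2 ≤ 1/2 := ridge_norm_bound lam hlam0 hn tφ ty tw hty htw
  have hsw : s * ‖w‖ ≤ 3/4 := by
    nlinarith [sq_nonneg (s * ‖w‖ - 3/4), norm_nonneg w]
  have hstw : s * ‖tw‖ ≤ 3/4 := by
    nlinarith [sq_nonneg (s * ‖tw‖ - 3/4), norm_nonneg tw]
  set d : ℝ := ‖w - tw‖ with hddef
  have hd0 : 0 ≤ d := norm_nonneg _
  -- gradient identities with direction w - tw
  have hg1 := ridge_grad_zero lam hlam0 φ y w hw (w - tw)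
  have hg2 := ridge_grad_zero lam hlam0 tφ ty tw htw (w - tw)
  have hdd : (inner ℝ w (w - tw) : ℝ) - (inner ℝ tw (w - tw) : ℝ) = d ^ 2 := by
    rw [← inner_sub_left, real_inner_self_eq_norm_sq]
  -- the sum difference
  set f : Fin n → ℝ := fun i =>
    ((inner ℝ w (φ i) : ℝ) - y i) * (inner ℝ (w - tw) (φ i) : ℝ)
    - ((inner ℝ tw (tφ i) : ℝ) - ty i) * (inner ℝ (w - tw) (tφ i) : ℝ) with hfdef
  have hsum : lam * d ^ 2 + (2/(n:ℝ)) * ∑ i, f i = 0 := by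
    have : ∑ i, f i = (∑ i, ((inner ℝ w (φ i) : ℝ) - y i) * (inner ℝ (w - tw) (φ i) : ℝ))
        - ∑ i, ((inner ℝ tw (tφ i) : ℝ) - ty i) * (inner ℝ (w - tw) (tφ i) : ℝ) := by
      rw [← Finset.sum_sub_distrib]
    rw [this]
    linear_combination hg1 - hg2 - lam * hdd
  have hoffk : 0 ≤ ∑ i ∈ Finset.univ.erase k, f i := by
    apply Finset.sum_nonneg
    intro i hi
    have hik : i ≠ k := Finset.ne_of_mem_erase hi
    have e1 : tφ i = φ i := (hφk i hik).symm
    have e2 : ty i = y i := (hyk i hik).symm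
    have e3 : (inner ℝ (w - tw) (φ i) : ℝ) = (inner ℝ w (φ i) : ℝ) - (inner ℝ tw (φ i) : ℝ) :=
      inner_sub_left _ _ _
    rw [hfdef]
    simp only [e1, e2]
    have key : ((inner ℝ w (φ i) : ℝ) - y i) * (inner ℝ (w - tw) (φ i) : ℝ)
        - ((inner ℝ tw (φ i) : ℝ) - y i) * (inner ℝ (w - tw) (φ i) : ℝ)
        = ((inner ℝ (w - tw) (φ i) : ℝ)) ^ 2 := by rw [e3]; ring
    linarith [key, sq_nonneg ((inner ℝ (w - tw) (φ i) : ℝ))]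
  have hsplit : ∑ i ∈ Finset.univ.erase k, f i + f k = ∑ i, f i :=
    Finset.sum_erase_add Finset.univ f (Finset.mem_univ k)
  -- bound on f k
  have hik1 : |(inner ℝ (w - tw) (φ k) : ℝ)| ≤ d :=
    le_trans (abs_real_inner_le_norm _ _) (mul_le_of_le_one_right (norm_nonneg _) (hφ k))
  have hik2 : |(inner ℝ (w - tw) (tφ k) : ℝ)| ≤ d :=
    le_trans (abs_real_inner_le_norm _ _) (mul_le_of_le_one_right (norm_nonneg _) (htφ k))
  have hr : |(inner ℝ w (φ k) : ℝ) - y k| ≤ ‖w‖ + 1 := by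
    have h1 : |(inner ℝ w (φ k) : ℝ)| ≤ ‖w‖ :=
      le_trans (abs_real_inner_le_norm _ _) (mul_le_of_le_one_right (norm_nonneg _) (hφ k))
    have h2 : |y k| ≤ 1 := abs_le.2 ⟨(hy k).1, (hy k).2⟩
    have h3 : |(inner ℝ w (φ k) : ℝ) - y k| ≤ |(inner ℝ w (φ k) : ℝ)| + |y k| := abs_sub _ _
    linarith
  have hs' : |(inner ℝ tw (tφ k) : ℝ) - ty k| ≤ ‖tw‖ + 1 := by
    have h1 : |(inner ℝ tw (tφ k) : ℝ)| ≤ ‖tw‖ :=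
      le_trans (abs_real_inner_le_norm _ _) (mul_le_of_le_one_right (norm_nonneg _) (htφ k))
    have h2 : |ty k| ≤ 1 := abs_le.2 ⟨(hty k).1, (hty k).2⟩
    have h3 : |(inner ℝ tw (tφ k) : ℝ) - ty k| ≤ |(inner ℝ tw (tφ k) : ℝ)| + |ty k| := abs_sub _ _
    linarith
  have hfk : -((‖w‖ + ‖tw‖ + 2) * d) ≤ f k := by
    rw [hfdef]
    have m1 : |((inner ℝ w (φ k) : ℝ) - y k) * (inner ℝ (w - tw) (φ k) : ℝ)| ≤ (‖w‖ + 1) * d := by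
      rw [abs_mul]
      exact mul_le_mul hr hik1 (abs_nonneg _) (by positivity)
    have m2 : |((inner ℝ tw (tφ k) : ℝ) - ty k) * (inner ℝ (w - tw) (tφ k) : ℝ)| ≤ (‖tw‖ + 1) * d := by
      rw [abs_mul]
      exact mul_le_mul hs' hik2 (abs_nonneg _) (by positivity)
    have n1 := neg_abs_le (((inner ℝ w (φ k) : ℝ) - y k) * (inner ℝ (w - tw) (φ k) : ℝ))
    have n2 := le_abs_self (((inner ℝ tw (tφ k) : ℝ) - ty k) * (inner ℝ (w - tw) (tφ k) : ℝ))
    have e : (‖w‖ + ‖tw‖ + 2) * d = (‖w‖ + 1) * d + (‖tw‖ + 1) * d := by ring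
    simp only []
    linarith
  -- main inequality: lam d^2 ≤ (2/n) C d
  have hC : lam * d ^ 2 ≤ (2/(n:ℝ)) * ((‖w‖ + ‖tw‖ + 2) * d) := by
    have hsumge : -((‖w‖ + ‖tw‖ + 2) * d) ≤ ∑ i, f i := by
      rw [← hsplit]; linarith
    have h5 : 0 ≤ (2/(n:ℝ)) * (∑ i, f i + (‖w‖ + ‖tw‖ + 2) * d) :=
      mul_nonneg (by positivity) (by linarith)
    nlinarith [hsum, h5]
  -- conclude d ≤ 8 / (n s^3)
  have hds : d ≤ 8 / ((n:ℝ) * s ^ 3) := by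
    rcases eq_or_lt_of_le hd0 with h0 | h0
    · rw [← h0]; positivity
    · rw [le_div_iff₀ (by positivity)]
      -- reduce: d * (n * s^3) ≤ 8, using s^3 = s * lam
      have hA : lam * d ^ 2 * (n:ℝ) ≤ 2 * ((‖w‖ + ‖tw‖ + 2) * d) := by
        have h := mul_le_mul_of_nonneg_right hC hN.le
        have e : (2/(n:ℝ)) * ((‖w‖ + ‖tw‖ + 2) * d) * (n:ℝ) = 2 * ((‖w‖ + ‖tw‖ + 2) * d) := by
          field_simp
        nlinarith [h]
      have hCs : (‖w‖ + ‖tw‖ + 2) * s ≤ 4 := by nlinarith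
      have hB : lam * d ^ 2 * (n:ℝ) * s ≤ 8 * d := by
        have h := mul_le_mul_of_nonneg_right hA hs0.le
        have h2 := mul_le_mul_of_nonneg_right hCs hd0
        nlinarith [h, h2]
      -- divide by d
      have hlam_s : s ^ 3 = s * lam := by rw [← hs2]; ring
      rw [hlam_s]
      have := (mul_le_mul_iff_of_pos_right h0).1 (by nlinarith [hB] : (d * ((n:ℝ) * (s * lam))) * d ≤ 8 * d)
      linarith
  -- final
  have hfin : |(inner ℝ w φ₀ : ℝ) - (inner ℝ tw φ₀ : ℝ)| ≤ d := by
    rw [show (inner ℝ w φ₀ : ℝ) - (inner ℝ tw φ₀ : ℝ) = (inner ℝ (w - tw) φ₀ : ℝ) by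
      rw [inner_sub_left]]
    exact le_trans (abs_real_inner_le_norm _ _) (mul_le_of_le_one_right (norm_nonneg _) hφ₀)
  rw [hrp]
  linarith
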